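/- Let X be a 2-based Banach space with natural parameterization r. Then the following are equivalent: (1) X is linearly isometric to the 2-dimensional Euclidean Hilbert space; (2) r is twice differentiable at every s ∈ ℝ with r''(s) = −r(s) (i.e. X has radial curvature ρ(s) = 1 and tangential curvature τ(s) = 0 for all s ∈ ℝ). -/

import Mathlib

noncomputable section
open MeasureTheory Set Filter
open scoped ENNReal Topology

variable {X : Type*} [NormedAddCommGroup X] [NormedSpace ℝ X]

/-- `e^{it} = cos t • e₁ + sin t • e₂` for the basis `b 0, b 1`. -/
def expV (b : Module.Basis (Fin 2) ℝ X) (t : ℝ) : X :=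
  Real.cos t • b 0 + Real.sin t • b 1

/-- The polar parameterization `p(t) = e^{it}/‖e^{it}‖` of the unit sphere. -/
def polarParam (b : Module.Basis (Fin 2) ℝ X) (t : ℝ) : X :=
  ‖expV b t‖⁻¹ • expV b t

/-- The Euclidean norm `|x| = √(e₁*(x)² + e₂*(x)²)` associated to the basis. -/
def euclNorm (b : Module.Basis (Fin 2) ℝ X) (x : X) : ℝ :=
  Real.sqrt ((b.coord 0 x)^2 + (b.coord 1 x)^2)

/-- `c = min{‖x‖ : |x| = 1}`. -/
def cConst (b : Module.Basis (Fin 2) ℝ X) : ℝ :=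
  sInf (norm '' {x : X | euclNorm b x = 1})

/-- `C = max{‖x‖ : |x| = 1}`. -/
def CConst (b : Module.Basis (Fin 2) ℝ X) : ℝ :=
  sSup (norm '' {x : X | euclNorm b x = 1})

/-- The right derivative of a function `f : ℝ → X`. -/
def rightDeriv (f : ℝ → X) (t : ℝ) : X := derivWithin f (Ici t) t

/-- The left derivative of a function `f : ℝ → X`. -/
def leftDeriv (f : ℝ → X) (t : ℝ) : X := derivWithin f (Iic t) t

/-- The arc-length function `s(t) = ∫₀^t ‖p'₊(u)‖ du`. -/
def arcLen (b : Module.Basis (Fin 2) ℝ X) (t : ℝ) : ℝ :=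
  ∫ u in (0:ℝ)..t, ‖rightDeriv (polarParam b) u‖

/-- The half-length `L = s(π)` of the unit sphere. -/
def halfLen (b : Module.Basis (Fin 2) ℝ X) : ℝ := arcLen b Real.pi

/-- The inverse `t = s⁻¹` of the arc-length function. -/
def arcInv (b : Module.Basis (Fin 2) ℝ X) : ℝ → ℝ := Function.invFun (arcLen b)

/-- The natural parameterization `r = p ∘ t` of the unit sphere. -/
def natParam (b : Module.Basis (Fin 2) ℝ X) : ℝ → X := polarParam b ∘ arcInv b

/-- Local absolute continuity of `f` with a.e. derivative `f'`, in the sense that `f` is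
differentiable almost everywhere, `f'` is locally integrable, and `f` is recovered from `f'`
by integration. -/
def LocAC {E : Type*} [NormedAddCommGroup E] [NormedSpace ℝ E] [CompleteSpace E]
    (f f' : ℝ → E) : Prop :=
  (∀ᵐ t : ℝ, HasDerivAt f (f' t) t) ∧ LocallyIntegrable f' volume ∧
    ∀ a b : ℝ, a ≤ b → f b - f a = ∫ t in a..b, f' t

/-- `s` is a Lebesgue point of `g`. -/
def LebesguePoint {E : Type*} [NormedAddCommGroup E] (g : ℝ → E) (s : ℝ) : Prop :=
  Tendsto (fun ε : ℝ => (1/ε) * ∫ t in (0:ℝ)..ε, ‖g (s + t) - g s‖) (𝓝[≠] (0:ℝ)) (𝓝 0)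

/-!
If `X` is Euclidean, an isometry carries everything to `ℂ`. There `w(t) = cos t • e₁ + sin t • e₂`
and `p = w / |w|` satisfies `p' = κ • (i * p)` with `κ = det(e₁, e₂) / |w|²`, which has constant
sign; so the arc-length reparametrization `r` satisfies `r' = ± i * r`, whence `r'' = -r`.
Conversely, `r'' = -r` forces `r s = cos s • r 0 + sin s • r' 0`, and `‖r‖ = 1` then makes
`z ↦ Re z • r 0 + Im z • r' 0` a linear isometry from `ℂ` onto `X`.
-/

open Function Complex

section ArcLength

variable {E : Type*} [NormedAddCommGroup E] [NormedSpace ℝ E]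

lemma strictMono_primitive_of_pos {f : ℝ → ℝ} (hf : Continuous f) (hpos : ∀ t, 0 < f t) :
    StrictMono fun t => ∫ u in (0:ℝ)..t, f u :=
  strictMono_of_hasDerivAt_pos (fun t => (hf.integral_hasStrictDerivAt 0 t).hasDerivAt) hpos

lemma surjective_primitive_of_periodic {f : ℝ → ℝ} {T : ℝ} (hf : Continuous f)
    (hpos : ∀ t, 0 < f t) (hper : Periodic f T) (hT : 0 < T) :
    Surjective fun t => ∫ u in (0:ℝ)..t, f u :=
  (intervalIntegral.continuous_primitive (fun a b => hf.intervalIntegrable a b) 0).surjective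
    (hper.tendsto_atTop_intervalIntegral_of_pos' (hf.intervalIntegrable 0 T) hpos hT)
    (hper.tendsto_atBot_intervalIntegral_of_pos' (hf.intervalIntegrable 0 T) hpos hT)

lemma hasDerivAt_invFun_of_strictMono {S f : ℝ → ℝ} (hmono : StrictMono S) (hsurj : Surjective S)
    (hS : ∀ t, HasDerivAt S (f t) t) (hf : ∀ t, f t ≠ 0) (s : ℝ) :
    HasDerivAt (invFun S) (f (invFun S s))⁻¹ s := by
  have hright : ∀ y, S (invFun S y) = y := rightInverse_invFun hsurj
  have hinv_mono : Monotone (invFun S) := fun x y hxy => by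
    rwa [← hmono.le_iff_le, hright, hright]
  exact HasDerivAt.of_local_left_inverse
    (hinv_mono.continuous_of_surjective (invFun_surjective hmono.injective)).continuousAt
    (hS _) (hf _) (Eventually.of_forall hright)

/-- Periodicity of the speed makes the arc length a bijection of `ℝ`. -/
theorem hasDerivAt_comp_invFun_arcLength {p p' : ℝ → E} {T : ℝ} (hp : ∀ t, HasDerivAt p (p' t) t)
    (hp' : Continuous p') (h0 : ∀ t, p' t ≠ 0) (hper : Periodic (fun t => ‖p' t‖) T) (hT : 0 < T)
    (s : ℝ) :
    HasDerivAt (p ∘ invFun fun t => ∫ u in (0:ℝ)..t, ‖p' u‖)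
      (‖p' (invFun (fun t => ∫ u in (0:ℝ)..t, ‖p' u‖) s)‖⁻¹ •
        p' (invFun (fun t => ∫ u in (0:ℝ)..t, ‖p' u‖) s)) s := by
  have hspeed : Continuous fun t => ‖p' t‖ := hp'.norm
  have hpos : ∀ t, 0 < ‖p' t‖ := fun t => norm_pos_iff.2 (h0 t)
  exact (hp _).scomp s <| hasDerivAt_invFun_of_strictMono
    (strictMono_primitive_of_pos hspeed hpos) (surjective_primitive_of_periodic hspeed hpos hper hT)
    (fun t => (hspeed.integral_hasStrictDerivAt 0 t).hasDerivAt) (fun t => (hpos t).ne') s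

end ArcLength

lemma HasDerivAt.norm_complex {w : ℝ → ℂ} {w' : ℂ} {t : ℝ} (hw : HasDerivAt w w' t)
    (h0 : w t ≠ 0) : HasDerivAt (fun t => ‖w t‖) ((w' / w t).re * ‖w t‖) t := by
  have hsqrt := hw.norm_sq.sqrt (by positivity)
  simp only [Real.sqrt_sq (norm_nonneg _)] at hsqrt
  refine hsqrt.congr_deriv ?_
  have hn : ‖w t‖ ≠ 0 := norm_ne_zero_iff.2 h0
  rw [Complex.inner, div_re, normSq_eq_norm_sq, mul_re, conj_re, conj_im]
  field_simp
  ring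

lemma HasDerivAt.norm_inv_smul_self {w : ℝ → ℂ} {w' : ℂ} {t : ℝ} (hw : HasDerivAt w w' t)
    (h0 : w t ≠ 0) :
    HasDerivAt (fun t => ‖w t‖⁻¹ • w t) ((w' / w t).im • (I * (‖w t‖⁻¹ • w t))) t := by
  have hn : ‖w t‖ ≠ 0 := norm_ne_zero_iff.2 h0
  refine (((hw.norm_complex h0).inv hn).smul hw).congr_deriv ?_
  obtain ⟨z, rfl⟩ : ∃ z, w' = z * w t := ⟨w' / w t, (div_mul_cancel₀ w' h0).symm⟩
  have hz : z = z.re + z.im * I := (re_add_im z).symm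
  simp only [mul_div_cancel_right₀ z h0, Pi.inv_apply, real_smul]
  push_cast
  have hn' : (‖w t‖ : ℂ) ≠ 0 := ofReal_ne_zero.2 hn
  field_simp
  linear_combination hz

section HarmonicOscillator

variable {E F : Type*} [NormedAddCommGroup E] [NormedSpace ℝ E] [NormedAddCommGroup F]
  [NormedSpace ℝ F]

def SolvesHarmonicOscillator (r : ℝ → E) : Prop :=
  ∀ s, DifferentiableAt ℝ r s ∧ HasDerivAt (deriv r) (-(r s)) s

lemma SolvesHarmonicOscillator.comp_continuousLinearMap {r : ℝ → E}
    (hr : SolvesHarmonicOscillator r) (L : E →L[ℝ] F) : SolvesHarmonicOscillator (L ∘ r) := by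
  have hderiv : deriv (L ∘ r) = L ∘ deriv r := funext fun s =>
    (L.hasFDerivAt.comp_hasDerivAt s (hr s).1.hasDerivAt).deriv
  intro s
  refine ⟨L.differentiableAt.comp s (hr s).1, ?_⟩
  rw [hderiv, comp_apply, ← map_neg]
  exact L.hasFDerivAt.comp_hasDerivAt s (hr s).2

lemma solvesHarmonicOscillator_of_hasDerivAt_mul {r : ℝ → ℂ} {c : ℂ} (hc : c * c = -1)
    (hr : ∀ s, HasDerivAt r (c * r s) s) : SolvesHarmonicOscillator r := by
  have hderiv : deriv r = fun s => c * r s := funext fun s => (hr s).deriv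
  intro s
  refine ⟨(hr s).differentiableAt, ?_⟩
  rw [hderiv]
  refine ((hr s).const_mul c).congr_deriv ?_
  linear_combination r s * hc

lemma SolvesHarmonicOscillator.eq_cos_smul_add_sin_smul {r : ℝ → E}
    (hr : SolvesHarmonicOscillator r) (s : ℝ) :
    r s = Real.cos s • r 0 + Real.sin s • deriv r 0 := by
  have hconst : ∀ x, HasDerivAt (fun x => Real.cos (s - x) • r x + Real.sin (s - x) • deriv r x)
      0 x := by
    intro x
    have hcos : HasDerivAt (fun x => Real.cos (s - x)) (Real.sin (s - x)) x :=
      ((hasDerivAt_id' x).const_sub s).cos.congr_deriv (by ring)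
    have hsin : HasDerivAt (fun x => Real.sin (s - x)) (-Real.cos (s - x)) x :=
      ((hasDerivAt_id' x).const_sub s).sin.congr_deriv (by ring)
    refine ((hcos.smul (hr x).1.hasDerivAt).add (hsin.smul (hr x).2)).congr_deriv ?_
    simp only [smul_neg, neg_smul]
    abel
  simpa using is_const_of_deriv_eq_zero (fun x => (hconst x).differentiableAt)
    (fun x => (hconst x).deriv) s 0

end HarmonicOscillator

section NaturalParameterization

variable (b : Module.Basis (Fin 2) ℝ X)

lemma expV_ne_zero (t : ℝ) : expV b t ≠ 0 := by
  intro h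
  have h0 := congrArg (b.coord 0) h
  have h1 := congrArg (b.coord 1) h
  simp [expV] at h0 h1
  simpa [h0, h1] using Real.sin_sq_add_cos_sq t

lemma expV_add_pi (t : ℝ) : expV b (t + Real.pi) = -expV b t := by
  simp only [expV, Real.cos_add_pi, Real.sin_add_pi, neg_smul, neg_add]

lemma hasDerivAt_expV (t : ℝ) :
    HasDerivAt (expV b) (-Real.sin t • b 0 + Real.cos t • b 1) t :=
  ((Real.hasDerivAt_cos t).smul_const (b 0)).add ((Real.hasDerivAt_sin t).smul_const (b 1))

lemma norm_polarParam (t : ℝ) : ‖polarParam b t‖ = 1 := by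
  rw [polarParam, norm_smul, norm_inv, norm_norm,
    inv_mul_cancel₀ (norm_ne_zero_iff.2 (expV_ne_zero b t))]

lemma norm_natParam (s : ℝ) : ‖natParam b s‖ = 1 :=
  norm_polarParam b _

lemma natParam_map {Y : Type*} [NormedAddCommGroup Y] [NormedSpace ℝ Y] (e : X ≃ₗᵢ[ℝ] Y) :
    natParam (b.map e.toLinearEquiv) = e ∘ natParam b := by
  have hexp : ∀ t, expV (b.map e.toLinearEquiv) t = e (expV b t) := fun t => by simp [expV]
  have hpolar : polarParam (b.map e.toLinearEquiv) = e ∘ polarParam b := by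
    funext t
    simp [polarParam, hexp]
  have harc : arcLen (b.map e.toLinearEquiv) = arcLen b := by
    funext t
    simp only [arcLen, rightDeriv, hpolar, ← fderivWithin_derivWithin]
    congr 1 with u
    rw [show (e ∘ polarParam b) = e.toContinuousLinearEquiv ∘ polarParam b from rfl,
      e.toContinuousLinearEquiv.comp_fderivWithin (uniqueDiffWithinAt_Ici u)]
    simp
  rw [natParam, natParam, arcInv, arcInv, harc, hpolar]
  rfl

end NaturalParameterization

section ComplexPlane

variable (b : Module.Basis (Fin 2) ℝ ℂ)

lemma im_div_expV (t : ℝ) :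
    ((-Real.sin t • b 0 + Real.cos t • b 1) / expV b t).im =
      basisOneI.det b / normSq (expV b t) := by
  rw [div_im, ← sub_div, Module.Basis.det_apply, Matrix.det_fin_two]
  congr 1
  simp only [Module.Basis.toMatrix_apply, coe_basisOneI_repr, expV, add_re, add_im, smul_re,
    smul_im, neg_smul, neg_re, neg_im, smul_eq_mul, Matrix.cons_val_zero, Matrix.cons_val_one]
  linear_combination ((b 0).re * (b 1).im - (b 1).re * (b 0).im) * Real.sin_sq_add_cos_sq t

lemma hasDerivAt_polarParam_complex (t : ℝ) :
    HasDerivAt (polarParam b)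
      ((basisOneI.det b / normSq (expV b t)) • (I * polarParam b t)) t := by
  have h := (hasDerivAt_expV b t).norm_inv_smul_self (expV_ne_zero b t)
  rwa [im_div_expV] at h

lemma exists_hasDerivAt_natParam_complex :
    ∃ c : ℂ, c * c = -1 ∧ ∀ s, HasDerivAt (natParam b) (c * natParam b s) s := by
  set D := basisOneI.det b
  have hD : D ≠ 0 := (basisOneI.isUnit_det b).ne_zero
  have hN : ∀ t, 0 < normSq (expV b t) := fun t => normSq_pos.2 (expV_ne_zero b t)
  set p' : ℝ → ℂ := fun t => (D / normSq (expV b t)) • (I * polarParam b t)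
  have hp : ∀ t, HasDerivAt (polarParam b) (p' t) t := hasDerivAt_polarParam_complex b
  have hspeed : ∀ t, ‖p' t‖ = |D| / normSq (expV b t) := fun t => by
    simp [p', norm_polarParam, abs_of_pos (hN t)]
  have harc : arcLen b = fun t => ∫ u in (0:ℝ)..t, ‖p' u‖ := by
    funext t
    refine intervalIntegral.integral_congr fun u _ => ?_
    simp only [rightDeriv, (hp u).hasDerivWithinAt.derivWithin (uniqueDiffWithinAt_Ici u)]
  have hcont : Continuous p' := by
    have hpolar : Continuous (polarParam b) :=
      continuous_iff_continuousAt.2 fun t => (hp t).continuousAt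
    have hexp : Continuous (expV b) := by unfold expV; fun_prop
    exact (continuous_const.div (continuous_normSq.comp hexp) fun t => (hN t).ne').smul
      (continuous_const.mul hpolar)
  have h0 : ∀ t, p' t ≠ 0 := fun t => by
    rw [← norm_ne_zero_iff, hspeed]
    exact (div_pos (abs_pos.2 hD) (hN t)).ne'
  have hper : Periodic (fun t => ‖p' t‖) Real.pi := fun t => by
    simp only [hspeed, expV_add_pi, normSq_neg]
  refine ⟨((D / |D| : ℝ) : ℂ) * I, ?_, fun s => ?_⟩
  · have hsign : (D / |D|) ^ 2 = 1 := by
      rw [div_pow, sq_abs, div_self (pow_ne_zero 2 hD)]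
    have hsign' : ((D / |D| : ℝ) : ℂ) ^ 2 = 1 := by exact_mod_cast hsign
    linear_combination (I * I) * hsign' + I_mul_I
  · rw [natParam, arcInv, harc]
    refine (hasDerivAt_comp_invFun_arcLength hp hcont h0 hper Real.pi_pos s).congr_deriv ?_
    rw [comp_apply]
    set t := invFun (fun t => ∫ u in (0:ℝ)..t, ‖p' u‖) s
    have hsign : (|D| / normSq (expV b t))⁻¹ * (D / normSq (expV b t)) = D / |D| := by
      field_simp [(hN t).ne']
    rw [hspeed, smul_smul, hsign, real_smul, mul_assoc]

end ComplexPlane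

section CosSinIsometry

variable {A B : X}

lemma norm_re_smul_add_im_smul (h : ∀ s, ‖Real.cos s • A + Real.sin s • B‖ = 1) (z : ℂ) :
    ‖z.re • A + z.im • B‖ = ‖z‖ := by
  rw [← norm_mul_cos_arg z, ← norm_mul_sin_arg z, mul_smul, mul_smul, ← smul_add, norm_smul,
    h, norm_norm, mul_one]

def cosSinIsometry (h : ∀ s, ‖Real.cos s • A + Real.sin s • B‖ = 1) : ℂ →ₗᵢ[ℝ] X where
  toLinearMap := reLm.smulRight A + imLm.smulRight B
  norm_map' := norm_re_smul_add_im_smul h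

lemma nonempty_linearIsometryEquiv_euclidean (b : Module.Basis (Fin 2) ℝ X)
    (h : ∀ s, ‖Real.cos s • A + Real.sin s • B‖ = 1) :
    Nonempty (X ≃ₗᵢ[ℝ] EuclideanSpace ℝ (Fin 2)) := by
  have := b.finiteDimensional_of_finite
  have hdim : Module.finrank ℝ ℂ = Module.finrank ℝ X := by
    rw [finrank_real_complex, Module.finrank_eq_card_basis b, Fintype.card_fin]
  exact ⟨((cosSinIsometry h).toLinearIsometryEquiv hdim).symm.trans orthonormalBasisOneI.repr⟩

end CosSinIsometry

theorem isometric_euclidean_iff_curvature_general (b : Module.Basis (Fin 2) ℝ X) :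
    Nonempty (X ≃ₗᵢ[ℝ] EuclideanSpace ℝ (Fin 2)) ↔
      (∀ s : ℝ, DifferentiableAt ℝ (natParam b) s ∧
        HasDerivAt (deriv (natParam b)) (-(natParam b s)) s) := by
  change _ ↔ SolvesHarmonicOscillator (natParam b)
  constructor
  · rintro ⟨iso⟩
    let e : X ≃ₗᵢ[ℝ] ℂ := iso.trans orthonormalBasisOneI.repr.symm
    obtain ⟨c, hc, hr⟩ := exists_hasDerivAt_natParam_complex (b.map e.toLinearEquiv)
    have hnat : natParam b = e.symm ∘ natParam (b.map e.toLinearEquiv) := by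
      rw [natParam_map, ← comp_assoc, e.symm_comp_self, id_comp]
    rw [hnat]
    exact (solvesHarmonicOscillator_of_hasDerivAt_mul hc hr).comp_continuousLinearMap
      e.symm.toContinuousLinearEquiv.toContinuousLinearMap
  · intro hr
    exact nonempty_linearIsometryEquiv_euclidean b fun s => by
      rw [← hr.eq_cos_smul_add_sin_smul, norm_natParam]

/-- A 2-based Banach space is linearly isometric to the 2-dimensional Euclidean Hilbert space
if and only if its natural parameterization satisfies `r'' = −r` everywhere (radial curvature
`1`, tangential curvature `0`). -/
theorem isometric_euclidean_iff_curvature [CompleteSpace X] (b : Module.Basis (Fin 2) ℝ X) :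
    Nonempty (X ≃ₗᵢ[ℝ] EuclideanSpace ℝ (Fin 2)) ↔
      (∀ s : ℝ, DifferentiableAt ℝ (natParam b) s ∧
        HasDerivAt (deriv (natParam b)) (-(natParam b s)) s) :=
  isometric_euclidean_iff_curvature_general b
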